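/- Let d ≥ 1, δ > 0, and let C ⊆ ℝ^d be a nonempty closed convex set. Define p_δ : [0,∞) → ℝ by p_δ(t) = (2/(δ²d))t² for t ≤ δ√d/2, p_δ(t) = −(2/(δ²d))t² + (4/(δ√d))t − 1 for δ√d/2 < t < δ√d, and p_δ(t) = 1 for t ≥ δ√d; and set f(x) := p_δ(dist₂(x,C)) where dist₂(x,C) = inf_{y∈C} ‖x−y‖₂. Then: (i) f is continuously differentiable on ℝ^d; (ii) 0 ≤ f(x) ≤ 1 for all x; (iii) f(x) = 0 for x ∈ C; (iv) f(x) = 1 whenever dist₂(x,C) ≥ δ√d; (v) f is Lipschitz with constant 2/(δ√d); (vi) the gradient ∇f is Lipschitz with constant 40/(δ²d), i.e. ‖∇f(x) − ∇f(y)‖₂ ≤ (40/(δ²d))‖x−y‖₂ for all x,y ∈ ℝ^d (equivalently, every directional derivative D^θf, θ a unit vector, is 40/(δ²d)-Lipschitz). -/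

import Mathlib

set_option maxHeartbeats 1000000


noncomputable section

/-- The piecewise polynomial smoothing profile `p_δ`. -/
def pdelta (d : ℕ) (δ : ℝ) (t : ℝ) : ℝ :=
  if t ≤ δ * Real.sqrt d / 2 then 2 / (δ ^ 2 * d) * t ^ 2
  else if t < δ * Real.sqrt d then -(2 / (δ ^ 2 * d)) * t ^ 2 + 4 / (δ * Real.sqrt d) * t - 1
  else 1

/-- The smoothed distance function `f(x) = p_δ(dist₂(x, C))`. -/
def smoothDistFun (d : ℕ) (δ : ℝ) (C : Set (EuclideanSpace ℝ (Fin d)))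
    (x : EuclideanSpace ℝ (Fin d)) : ℝ :=
  pdelta d δ (Metric.infDist x C)

-- ===== auxiliary development =====

noncomputable section
namespace SD

open Metric
open scoped RealInnerProductSpace

variable {E : Type*} [NormedAddCommGroup E] [InnerProductSpace ℝ E] [CompleteSpace E]

variable (C : Set E)

def projC (hne : C.Nonempty) (hcl : IsClosed C) (hconv : Convex ℝ C) (x : E) : E :=
  (exists_norm_eq_iInf_of_complete_convex hne hcl.isComplete hconv x).choose

variable {C} (hne : C.Nonempty) (hcl : IsClosed C) (hconv : Convex ℝ C)

lemma projC_mem (x : E) : projC C hne hcl hconv x ∈ C :=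
  (exists_norm_eq_iInf_of_complete_convex hne hcl.isComplete hconv x).choose_spec.1

lemma projC_norm (x : E) : ‖x - projC C hne hcl hconv x‖ = ⨅ w : C, ‖x - w‖ :=
  (exists_norm_eq_iInf_of_complete_convex hne hcl.isComplete hconv x).choose_spec.2

lemma infDist_eq_projC (x : E) : infDist x C = ‖x - projC C hne hcl hconv x‖ := by
  rw [projC_norm hne hcl hconv x, infDist_eq_iInf]
  simp_rw [dist_eq_norm]

lemma projC_inner_le (x : E) : ∀ w ∈ C, ⟪x - projC C hne hcl hconv x, w - projC C hne hcl hconv x⟫ ≤ 0 :=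
  (norm_eq_iInf_iff_real_inner_le_zero hconv (projC_mem hne hcl hconv x)).1
    (projC_norm hne hcl hconv x)

lemma projC_mono (x y : E) :
    ‖projC C hne hcl hconv x - projC C hne hcl hconv y‖ ^ 2
      ≤ ⟪x - y, projC C hne hcl hconv x - projC C hne hcl hconv y⟫ := by
  set Px := projC C hne hcl hconv x
  set Py := projC C hne hcl hconv y
  have h1 := projC_inner_le hne hcl hconv x Py (projC_mem hne hcl hconv y)
  have h2 := projC_inner_le hne hcl hconv y Px (projC_mem hne hcl hconv x)
  have e : ⟪x - y, Px - Py⟫ - ‖Px - Py‖^2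
      = -(⟪x - Px, Py - Px⟫ + ⟪y - Py, Px - Py⟫) := by
    rw [← real_inner_self_eq_norm_sq]
    simp only [inner_sub_left, inner_sub_right]
    ring
  nlinarith [h1, h2]

/-- `x ↦ x - P x` is 1-Lipschitz. -/
lemma wmap_lip (x y : E) :
    ‖(x - projC C hne hcl hconv x) - (y - projC C hne hcl hconv y)‖ ≤ ‖x - y‖ := by
  set Px := projC C hne hcl hconv x
  set Py := projC C hne hcl hconv y
  have h := projC_mono hne hcl hconv x y
  have e : ‖(x - Px) - (y - Py)‖^2 = ‖x - y‖^2 - 2 * ⟪x - y, Px - Py⟫ + ‖Px - Py‖^2 := by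
    rw [← real_inner_self_eq_norm_sq, ← real_inner_self_eq_norm_sq, ← real_inner_self_eq_norm_sq]
    simp only [inner_sub_left, inner_sub_right, real_inner_comm x y]
    ring_nf
    rw [real_inner_comm Py x, real_inner_comm Px x, real_inner_comm Py y, real_inner_comm Px y,
      real_inner_comm Py Px]
    ring
  have h2 : ‖(x - Px) - (y - Py)‖^2 ≤ ‖x - y‖^2 := by nlinarith
  exact (pow_le_pow_iff_left₀ (norm_nonneg _) (norm_nonneg _) two_ne_zero).1 h2

end SD

noncomputable section
namespace SD

open Metric Asymptotics
open scoped RealInnerProductSpace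

variable {E : Type*} [NormedAddCommGroup E] [InnerProductSpace ℝ E] [CompleteSpace E]
variable {C : Set E} (hne : C.Nonempty) (hcl : IsClosed C) (hconv : Convex ℝ C)

lemma sq_infDist_le (y z : E) (hz : z ∈ C) : infDist y C ^ 2 ≤ ‖y - z‖ ^ 2 := by
  have h1 : infDist y C ≤ ‖y - z‖ := by
    simpa [dist_eq_norm] using infDist_le_dist_of_mem (x := y) hz
  exact pow_le_pow_left₀ (infDist_nonneg) h1 2

lemma inner_split (u vx vy : E) : (⟪-u, vy⟫ : ℝ) = -⟪u, vx⟫ - ⟪u, vy - vx⟫ := by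
  rw [inner_neg_left, inner_sub_right]; ring

lemma rem_bound (x y : E) :
    |infDist y C ^ 2 - infDist x C ^ 2
      - ⟪(2:ℝ) • (x - projC C hne hcl hconv x), y - x⟫| ≤ 3 * ‖y - x‖ ^ 2 := by
  set Px := projC C hne hcl hconv x with hPx
  set Py := projC C hne hcl hconv y with hPy
  set wx := x - Px
  set wy := y - Py
  have hgx : infDist x C ^ 2 = ‖wx‖ ^ 2 := by rw [infDist_eq_projC hne hcl hconv x]
  have hgy : infDist y C ^ 2 = ‖wy‖ ^ 2 := by rw [infDist_eq_projC hne hcl hconv y]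
  have hup : infDist y C ^ 2 ≤ ‖y - Px‖ ^ 2 := sq_infDist_le y Px (projC_mem hne hcl hconv x)
  have hlo : infDist x C ^ 2 ≤ ‖x - Py‖ ^ 2 := sq_infDist_le x Py (projC_mem hne hcl hconv y)
  have e1 : ‖y - Px‖ ^ 2 = ‖y - x‖ ^ 2 + 2 * ⟪y - x, wx⟫ + ‖wx‖ ^ 2 := by
    have : y - Px = (y - x) + wx := by show y - Px = (y - x) + (x - Px); abel
    rw [this, norm_add_sq_real]
  have e2 : ‖x - Py‖ ^ 2 = ‖x - y‖ ^ 2 + 2 * ⟪x - y, wy⟫ + ‖wy‖ ^ 2 := by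
    have : x - Py = (x - y) + wy := by show x - Py = (x - y) + (y - Py); abel
    rw [this, norm_add_sq_real]
  have hinn : ⟪(2:ℝ) • wx, y - x⟫ = 2 * ⟪y - x, wx⟫ := by
    rw [real_inner_smul_left, real_inner_comm]
  have hcross : |⟪y - x, wy - wx⟫| ≤ ‖y - x‖ ^ 2 := by
    calc |⟪y - x, wy - wx⟫| ≤ ‖y - x‖ * ‖wy - wx‖ := abs_real_inner_le_norm _ _
    _ ≤ ‖y - x‖ * ‖y - x‖ := by
        refine mul_le_mul_of_nonneg_left ?_ (norm_nonneg _)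
        simpa [norm_sub_rev] using wmap_lip hne hcl hconv y x
    _ = ‖y - x‖ ^ 2 := by ring
  have hxy : ‖x - y‖ = ‖y - x‖ := norm_sub_rev _ _
  have hsplit : (⟪x - y, wy⟫ : ℝ) = -⟪y - x, wx⟫ - ⟪y - x, wy - wx⟫ := by
    rw [show x - y = -(y - x) by abel]
    exact inner_split (y - x) wx wy
  have hxy2 : ‖x - y‖ ^ 2 = ‖y - x‖ ^ 2 := by rw [hxy]
  rw [hinn, abs_le]
  constructor
  · linarith [hlo, e2, hsplit, (abs_le.1 hcross).1, (abs_le.1 hcross).2, sq_nonneg ‖y - x‖]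
  · linarith [hup, e1, hgx, hgy, sq_nonneg ‖y - x‖]

lemma g_hasFDerivAt (x : E) :
    HasFDerivAt (fun y => infDist y C ^ 2)
      (innerSL ℝ ((2:ℝ) • (x - projC C hne hcl hconv x))) x := by
  refine hasFDerivAt_iff_isLittleO.2 ?_
  rw [isLittleO_iff]
  intro ε hε
  have hball : Metric.ball x (ε / 3) ∈ nhds x := Metric.ball_mem_nhds x (by positivity)
  filter_upwards [hball] with y hy
  have h1 := rem_bound hne hcl hconv x y
  simp only [innerSL_apply_apply]
  have h2 : ‖y - x‖ < ε / 3 := by rwa [Metric.mem_ball, dist_eq_norm] at hy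
  have h3 : ‖y - x‖ ^ 2 ≤ (ε / 3) * ‖y - x‖ := by
    nlinarith [norm_nonneg (y - x)]
  calc ‖infDist y C ^ 2 - infDist x C ^ 2 - ⟪(2:ℝ) • (x - projC C hne hcl hconv x), y - x⟫‖
      ≤ 3 * ‖y - x‖ ^ 2 := h1
    _ ≤ ε * ‖y - x‖ := by nlinarith [norm_nonneg (y - x)]

end SD
end

noncomputable section
namespace SD

open Metric Asymptotics Filter
open scoped RealInnerProductSpace Topology

/-- Gluing two functions with matching value and derivative at a junction point. -/
lemma hasDerivAt_glue {q q₁ q₂ : ℝ → ℝ} {t0 c : ℝ}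
    (h1 : HasDerivAt q₁ c t0) (h2 : HasDerivAt q₂ c t0)
    (hv : q t0 = q₁ t0) (hv' : q₁ t0 = q₂ t0)
    (he : ∀ᶠ u in 𝓝 t0, (u ≤ t0 → q u = q₁ u) ∧ (t0 ≤ u → q u = q₂ u)) :
    HasDerivAt q c t0 := by
  rw [hasDerivAt_iff_isLittleO] at h1 h2 ⊢
  rw [isLittleO_iff] at h1 h2 ⊢
  intro ε hε
  filter_upwards [h1 hε, h2 hε, he] with u hu1 hu2 hue
  rcases le_total u t0 with h | h
  · rw [hue.1 h, hv]; exact hu1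
  · rw [hue.2 h, hv, hv']; exact hu2

/-- The profile reparametrized by the squared distance. `s = δ√d`. -/
def qfun (s u : ℝ) : ℝ :=
  if u ≤ s ^ 2 / 4 then 2 / s ^ 2 * u
  else if u < s ^ 2 then -(2 / s ^ 2) * u + 4 / s * Real.sqrt u - 1
  else 1

def qder (s u : ℝ) : ℝ :=
  if u ≤ s ^ 2 / 4 then 2 / s ^ 2
  else if u < s ^ 2 then -(2 / s ^ 2) + 2 / (s * Real.sqrt u)
  else 0

variable {s : ℝ} (hs : 0 < s)

lemma hasDerivAt_lin (c u : ℝ) : HasDerivAt (fun v : ℝ => c * v) c u := by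
  simpa using (hasDerivAt_id u).const_mul c

/-- derivative of the middle piece -/
lemma hasDerivAt_mid (hs : 0 < s) {u : ℝ} (hu : 0 < u) :
    HasDerivAt (fun u => -(2 / s ^ 2) * u + 4 / s * Real.sqrt u - 1)
      (-(2 / s ^ 2) + 2 / (s * Real.sqrt u)) u := by
  have h1 : HasDerivAt (fun u : ℝ => -(2 / s ^ 2) * u) (-(2 / s ^ 2)) u := by
    simpa using (hasDerivAt_id u).const_mul (-(2 / s ^ 2))
  have h2 : HasDerivAt Real.sqrt (1 / (2 * Real.sqrt u)) u := Real.hasDerivAt_sqrt hu.ne'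
  have h3 : HasDerivAt (fun u : ℝ => 4 / s * Real.sqrt u) (4 / s * (1 / (2 * Real.sqrt u))) u :=
    h2.const_mul (4 / s)
  have h4 := (h1.add h3).sub_const 1
  refine h4.congr_deriv ?_
  have hsq : Real.sqrt u > 0 := Real.sqrt_pos.2 hu
  field_simp
  ring

lemma qfun_hasDerivAt (hs : 0 < s) (u : ℝ) : HasDerivAt (qfun s) (qder s u) u := by
  have hs2 : (0:ℝ) < s ^ 2 := by positivity
  rcases lt_trichotomy u (s ^ 2 / 4) with h | h | h
  · -- first open region
    have : qder s u = 2 / s ^ 2 := by rw [qder, if_pos h.le]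
    rw [this]
    have hloc : qfun s =ᶠ[𝓝 u] fun v => 2 / s ^ 2 * v := by
      filter_upwards [Iio_mem_nhds h] with v hv
      rw [Set.mem_Iio] at hv
      rw [qfun, if_pos (le_of_lt hv)]
    exact (hasDerivAt_lin (2 / s ^ 2) u).congr_of_eventuallyEq hloc
  · -- junction at s^2/4
    subst h
    have hsqrt : Real.sqrt (s ^ 2 / 4) = s / 2 := by
      rw [show s ^ 2 / 4 = (s / 2) ^ 2 by ring, Real.sqrt_sq (by positivity)]
    have hderq : qder s (s ^ 2 / 4) = 2 / s ^ 2 := by rw [qder, if_pos le_rfl]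
    rw [hderq]
    have hmid := hasDerivAt_mid hs (u := s ^ 2 / 4) (by positivity)
    have hmidval : -(2 / s ^ 2) + 2 / (s * Real.sqrt (s ^ 2 / 4)) = 2 / s ^ 2 := by
      rw [hsqrt]; field_simp; ring
    rw [hmidval] at hmid
    refine hasDerivAt_glue (hasDerivAt_lin (2 / s ^ 2) _) hmid ?_ ?_ ?_
    · rw [qfun, if_pos le_rfl]
    · rw [hsqrt]; field_simp; ring
    · filter_upwards [Iio_mem_nhds (show s ^ 2 / 4 < s ^ 2 by nlinarith)] with v hv
      rw [Set.mem_Iio] at hv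
      constructor
      · intro hv2; rw [qfun, if_pos hv2]
      · intro hv2
        rcases eq_or_lt_of_le hv2 with h' | h'
        · rw [qfun, if_pos h'.symm.le, ← h']
          rw [hsqrt]; field_simp; ring
        · rw [qfun, if_neg (not_le.2 h'), if_pos hv]
  · rcases lt_trichotomy u (s ^ 2) with h2 | h2 | h2
    · -- middle open region
      have hu0 : 0 < u := lt_trans (by positivity) h
      have : qder s u = -(2 / s ^ 2) + 2 / (s * Real.sqrt u) := by
        rw [qder, if_neg (not_le.2 h), if_pos h2]
      rw [this]
      refine (hasDerivAt_mid hs hu0).congr_of_eventuallyEq ?_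
      filter_upwards [Ioo_mem_nhds h h2] with v hv
      rw [Set.mem_Ioo] at hv
      rw [qfun, if_neg (not_le.2 hv.1), if_pos hv.2]
    · -- junction at s^2
      subst h2
      have hsqrt : Real.sqrt (s ^ 2) = s := Real.sqrt_sq hs.le
      have hderq : qder s (s ^ 2) = 0 := by
        rw [qder, if_neg (not_le.2 h), if_neg (lt_irrefl _)]
      rw [hderq]
      have hmid := hasDerivAt_mid hs (u := s ^ 2) (by positivity)
      have hmidval : -(2 / s ^ 2) + 2 / (s * Real.sqrt (s ^ 2)) = 0 := by
        rw [hsqrt]; field_simp; ring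
      rw [hmidval] at hmid
      have hmv : -(2 / s ^ 2) * s ^ 2 + 4 / s * Real.sqrt (s ^ 2) - 1 = 1 := by
        rw [hsqrt]; field_simp; ring
      refine hasDerivAt_glue hmid (hasDerivAt_const _ (1:ℝ)) ?_ ?_ ?_
      · rw [qfun, if_neg (not_le.2 h), if_neg (lt_irrefl _)]; exact hmv.symm
      · exact hmv
      · filter_upwards [Ioi_mem_nhds (show s ^ 2 / 4 < s ^ 2 by nlinarith)] with v hv
        rw [Set.mem_Ioi] at hv
        constructor
        · intro hv2
          rcases eq_or_lt_of_le hv2 with h' | h'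
          · rw [qfun, h', if_neg (not_le.2 h), if_neg (lt_irrefl _)]
            rw [← h']at hmv ⊢
            exact hmv.symm
          · rw [qfun, if_neg (not_le.2 hv), if_pos h']
        · intro hv2; rw [qfun, if_neg (not_le.2 (lt_of_lt_of_le (by nlinarith) hv2)),
            if_neg (not_lt.2 hv2)]
    · -- last open region
      have : qder s u = 0 := by
        rw [qder, if_neg, if_neg (not_lt.2 h2.le)]
        exact not_le.2 (lt_trans (by nlinarith) h2)
      rw [this]
      refine (hasDerivAt_const u (1:ℝ)).congr_of_eventuallyEq ?_
      filter_upwards [Ioi_mem_nhds h2] with v hv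
      rw [Set.mem_Ioi] at hv
      rw [qfun, if_neg, if_neg (not_lt.2 (le_of_lt hv))]
      exact not_le.2 (lt_trans (by nlinarith) hv)

end SD
end

noncomputable section
namespace SD

open Metric Asymptotics Filter
open scoped RealInnerProductSpace Topology

variable {E : Type*} [NormedAddCommGroup E] [InnerProductSpace ℝ E] [CompleteSpace E]
variable {C : Set E} (hne : C.Nonempty) (hcl : IsClosed C) (hconv : Convex ℝ C)
variable {s : ℝ}

/-- The vector field which is the gradient of `f`. -/
def Vf (hne : C.Nonempty) (hcl : IsClosed C) (hconv : Convex ℝ C) (s : ℝ) (x : E) : E :=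
  (2 * qder s (infDist x C ^ 2)) • (x - projC C hne hcl hconv x)

lemma f_hasFDerivAt (hs : 0 < s) (x : E) :
    HasFDerivAt (fun y => qfun s (infDist y C ^ 2))
      (innerSL ℝ (Vf hne hcl hconv s x)) x := by
  have h := (qfun_hasDerivAt hs (infDist x C ^ 2)).comp_hasFDerivAt x
    (g_hasFDerivAt hne hcl hconv x)
  have e : (2 * qder s (infDist x C ^ 2)) • (x - projC C hne hcl hconv x)
      = qder s (infDist x C ^ 2) • ((2:ℝ) • (x - projC C hne hcl hconv x)) := by
    rw [smul_smul, mul_comm]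
  rw [Vf, e, map_smul]
  exact h

/-- clamped distance -/
def tau (C : Set E) (s : ℝ) (x : E) : E → ℝ := fun x => min (max (infDist x C) (s / 2)) s

def tauf (C : Set E) (s : ℝ) (x : E) : ℝ := min (max (infDist x C) (s / 2)) s

lemma tauf_lb (hs : 0 < s) (x : E) : s / 2 ≤ tauf C s x :=
  le_min (le_max_right _ _) (by linarith)

lemma tauf_ub (x : E) : tauf C s x ≤ s := min_le_right _ _

lemma tauf_lip (x y : E) : |tauf C s x - tauf C s y| ≤ ‖x - y‖ := by
  have h1 : |infDist x C - infDist y C| ≤ ‖x - y‖ := by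
    have := (lipschitz_infDist_pt C).dist_le_mul x y
    rw [Real.dist_eq, dist_eq_norm] at this
    simpa using this
  calc |tauf C s x - tauf C s y|
      ≤ |max (infDist x C) (s/2) - max (infDist y C) (s/2)| := by
        have := abs_min_sub_min_le_max (max (infDist x C) (s/2)) s (max (infDist y C) (s/2)) s
        simpa [tauf] using this
    _ ≤ |infDist x C - infDist y C| := abs_max_sub_max_le_abs _ _ _
    _ ≤ ‖x - y‖ := h1

/-- closed form for the scalar coefficient -/
lemma coeff_eq (hs : 0 < s) (x : E) :
    2 * qder s (infDist x C ^ 2) = -(4 / s ^ 2) + 4 / (s * tauf C s x) := by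
  set t := infDist x C with ht
  have ht0 : 0 ≤ t := infDist_nonneg
  rcases le_or_gt t (s / 2) with h1 | h1
  · have hq : t ^ 2 ≤ s ^ 2 / 4 := by nlinarith
    have htau : tauf C s x = s / 2 := by
      rw [tauf, max_eq_right h1, min_eq_left (by linarith)]
    rw [qder, if_pos hq, htau]
    field_simp
    ring
  · rcases lt_or_ge t s with h2 | h2
    · have hq1 : ¬ t ^ 2 ≤ s ^ 2 / 4 := by nlinarith
      have hq2 : t ^ 2 < s ^ 2 := by nlinarith
      have htau : tauf C s x = t := by
        rw [tauf, max_eq_left h1.le, min_eq_left h2.le]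
      rw [qder, if_neg hq1, if_pos hq2, htau, Real.sqrt_sq ht0]
      ring
    · have hq1 : ¬ t ^ 2 ≤ s ^ 2 / 4 := by nlinarith
      have hq2 : ¬ t ^ 2 < s ^ 2 := by nlinarith
      have htau : tauf C s x = s := by
        rw [tauf, max_eq_left (by linarith), min_eq_right h2]
      rw [qder, if_neg hq1, if_neg hq2, htau, show s * s = s ^ 2 by ring]
      ring

lemma coeff_nonneg (hs : 0 < s) (x : E) :
    0 ≤ 2 * qder s (infDist x C ^ 2) := by
  rw [coeff_eq hs x]
  have h1 := tauf_lb (C := C) hs x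
  have h2 := tauf_ub (C := C) (s := s) x
  have h3 : 0 < tauf C s x := lt_of_lt_of_le (by linarith) h1
  have : 4 / (s * s) ≤ 4 / (s * tauf C s x) := by
    apply div_le_div_of_nonneg_left (by norm_num) (by positivity)
    exact mul_le_mul_of_nonneg_left h2 hs.le
  have e : 4 / (s * s) = 4 / s ^ 2 := by ring_nf
  linarith

lemma coeff_le (hs : 0 < s) (x : E) :
    2 * qder s (infDist x C ^ 2) ≤ 4 / s ^ 2 := by
  rw [coeff_eq hs x]
  have h1 := tauf_lb (C := C) hs x
  have : 4 / (s * tauf C s x) ≤ 4 / (s * (s / 2)) := by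
    apply div_le_div_of_nonneg_left (by norm_num) (by positivity)
    exact mul_le_mul_of_nonneg_left h1 hs.le
  have e : 4 / (s * (s / 2)) = 8 / s ^ 2 := by
    rw [show s * (s / 2) = s ^ 2 / 2 by ring]
    rw [div_div_eq_mul_div]
    ring
  have e2 : 8 / s ^ 2 = 2 * (4 / s ^ 2) := by ring
  linarith

end SD
end

noncomputable section
namespace SD

open Metric Asymptotics Filter
open scoped RealInnerProductSpace Topology

variable {E : Type*} [NormedAddCommGroup E] [InnerProductSpace ℝ E] [CompleteSpace E]
variable {C : Set E} (hne : C.Nonempty) (hcl : IsClosed C) (hconv : Convex ℝ C)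
variable {s : ℝ}

lemma Vf_norm (hs : 0 < s) (x : E) :
    ‖Vf hne hcl hconv s x‖ = 2 * qder s (infDist x C ^ 2) * infDist x C := by
  rw [Vf, norm_smul, Real.norm_eq_abs, abs_of_nonneg (coeff_nonneg hs x),
    ← infDist_eq_projC hne hcl hconv x]

lemma infDist_lip (x y : E) : |infDist x C - infDist y C| ≤ ‖x - y‖ := by
  have := (lipschitz_infDist_pt C).dist_le_mul x y
  rw [Real.dist_eq, dist_eq_norm] at this
  simpa using this

lemma Vf_norm_le (hs : 0 < s) (x : E) : ‖Vf hne hcl hconv s x‖ ≤ 2 / s := by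
  rw [Vf_norm hne hcl hconv hs x]
  set t := infDist x C with htdef
  have ht0 : (0:ℝ) ≤ t := infDist_nonneg
  have hc0 := coeff_nonneg (C := C) hs x
  have hcle := coeff_le (C := C) hs x
  rw [coeff_eq hs x] at hc0 hcle ⊢
  set τ := tauf C s x with hτdef
  have hτ1 := tauf_lb (C := C) hs x
  have hτ2 := tauf_ub (C := C) (s := s) x
  rcases le_or_gt t (s / 2) with h1 | h1
  · have hmul : (-(4 / s ^ 2) + 4 / (s * τ)) * t ≤ (4 / s ^ 2) * (s / 2) :=
      mul_le_mul hcle h1 ht0 (by positivity)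
    have e : (4 / s ^ 2) * (s / 2) = 2 / s := by field_simp; ring
    linarith
  · rcases lt_or_ge t s with h2 | h2
    · have hτt : τ = t := by
        rw [hτdef, tauf, max_eq_left h1.le, min_eq_left h2.le]
      rw [hτt]
      have htne : t ≠ 0 := ne_of_gt (lt_of_lt_of_le (by positivity) h1.le)
      have e : (-(4 / s ^ 2) + 4 / (s * t)) * t = -(4 / s ^ 2) * t + 4 / s := by
        field_simp
      rw [e]
      have e2 : -(4 / s ^ 2) * (s / 2) + 4 / s = 2 / s := by field_simp; ring
      have : -(4 / s ^ 2) * t ≤ -(4 / s ^ 2) * (s / 2) := by nlinarith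
      linarith
    · have hτs : τ = s := by
        rw [hτdef, tauf, max_eq_left (by linarith), min_eq_right h2]
      rw [hτs]
      have e : -(4 / s ^ 2) + 4 / (s * s) = 0 := by
        rw [show s * s = s ^ 2 by ring]; ring
      rw [e, zero_mul]
      positivity

lemma Vf_lip_aux (hs : 0 < s) (x y : E) (hxy : infDist x C ≤ infDist y C) :
    ‖Vf hne hcl hconv s x - Vf hne hcl hconv s y‖ ≤ 40 / s ^ 2 * ‖x - y‖ := by
  set tx := infDist x C with htx
  set ty := infDist y C with hty
  have htx0 : (0:ℝ) ≤ tx := infDist_nonneg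
  set cx := 2 * qder s (tx ^ 2) with hcx
  set cy := 2 * qder s (ty ^ 2) with hcy
  set wx := x - projC C hne hcl hconv x with hwx
  set wy := y - projC C hne hcl hconv y with hwy
  have hVx : Vf hne hcl hconv s x = cx • wx := rfl
  have hVy : Vf hne hcl hconv s y = cy • wy := rfl
  have hwlip : ‖wx - wy‖ ≤ ‖x - y‖ := wmap_lip hne hcl hconv x y
  have hwyn : ‖wy‖ = ty := (infDist_eq_projC hne hcl hconv y).symm
  have hwxn : ‖wx‖ = tx := (infDist_eq_projC hne hcl hconv x).symm
  have htlip : |tx - ty| ≤ ‖x - y‖ := infDist_lip x y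
  have hnn : (0:ℝ) ≤ ‖x - y‖ := norm_nonneg _
  rcases le_or_gt ty s with hcase | hcase
  · -- both distances ≤ s
    set τx := tauf C s x with hτx
    set τy := tauf C s y with hτy
    have hτx1 := tauf_lb (C := C) hs x
    have hτx2 := tauf_ub (C := C) (s := s) x
    have hτy1 := tauf_lb (C := C) hs y
    have hτy2 := tauf_ub (C := C) (s := s) y
    have hτx0 : 0 < τx := lt_of_lt_of_le (by linarith) hτx1
    have hτy0 : 0 < τy := lt_of_lt_of_le (by linarith) hτy1
    have hτlip : |τx - τy| ≤ ‖x - y‖ := tauf_lip x y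
    rw [← hτx] at hτx1 hτx2
    rw [← hτy] at hτy1 hτy2
    have hcxb := coeff_le (C := C) hs x
    have hcx0 := coeff_nonneg (C := C) hs x
    rw [← htx, ← hcx] at hcxb hcx0
    have hdiff : cx - cy = 4 * (τy - τx) / (s * (τx * τy)) := by
      rw [hcx, hcy, coeff_eq hs x, coeff_eq hs y, ← hτx, ← hτy]
      field_simp
      ring
    have habs : |cx - cy| ≤ 16 / s ^ 3 * ‖x - y‖ := by
      rw [hdiff, abs_div, abs_of_pos (mul_pos hs (mul_pos hτx0 hτy0))]
      have hnum : |4 * (τy - τx)| ≤ 4 * ‖x - y‖ := by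
        rw [abs_mul, abs_sub_comm]
        have : |(4:ℝ)| = 4 := by norm_num
        rw [this]
        linarith [hτlip]
      have hden : s ^ 3 / 4 ≤ s * (τx * τy) := by
        have h1 : s / 2 * (s / 2) ≤ τx * τy :=
          mul_le_mul hτx1 hτy1 (by positivity) hτx0.le
        nlinarith [mul_le_mul_of_nonneg_left h1 hs.le]
      calc |4 * (τy - τx)| / (s * (τx * τy)) ≤ (4 * ‖x - y‖) / (s ^ 3 / 4) := by
            apply div_le_div₀ (by positivity) hnum (by nlinarith [pow_pos hs 3]) hden
        _ = 16 / s ^ 3 * ‖x - y‖ := by field_simp; ring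
    have hsplit : cx • wx - cy • wy = cx • (wx - wy) + (cx - cy) • wy := by
      module
    rw [hVx, hVy, hsplit]
    calc ‖cx • (wx - wy) + (cx - cy) • wy‖
        ≤ ‖cx • (wx - wy)‖ + ‖(cx - cy) • wy‖ := norm_add_le _ _
      _ = |cx| * ‖wx - wy‖ + |cx - cy| * ‖wy‖ := by
          rw [norm_smul, norm_smul, Real.norm_eq_abs, Real.norm_eq_abs]
      _ ≤ (4 / s ^ 2) * ‖x - y‖ + (16 / s ^ 3 * ‖x - y‖) * s := by
          apply add_le_add
          · apply mul_le_mul (by rw [abs_of_nonneg hcx0]; exact hcxb) hwlip (norm_nonneg _)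
              (by positivity)
          · apply mul_le_mul habs (by rw [hwyn]; exact hcase) (norm_nonneg _)
              (by positivity)
      _ ≤ 40 / s ^ 2 * ‖x - y‖ := by
          have e : (16 / s ^ 3 * ‖x - y‖) * s = 16 / s ^ 2 * ‖x - y‖ := by
            field_simp
          rw [e]
          have : 4 / s ^ 2 + 16 / s ^ 2 ≤ 40 / s ^ 2 := by
            rw [← add_div]
            apply div_le_div_of_nonneg_right ?_ (by positivity)
            · norm_num
          nlinarith
  · -- ty > s : Vf y = 0
    have hτys : tauf C s y = s := by
      rw [tauf, max_eq_left (by linarith), min_eq_right (by linarith)]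
    have hcy0 : cy = 0 := by
      rw [hcy, coeff_eq hs y, hτys, show s * s = s ^ 2 by ring]; ring
    rw [hVx, hVy, hcy0, zero_smul, sub_zero]
    have hn : ‖cx • wx‖ = cx * tx := by
      rw [norm_smul, Real.norm_eq_abs, abs_of_nonneg (coeff_nonneg hs x), hwxn]
    rw [hn]
    have hkey : cx * tx ≤ 4 / s ^ 2 * (ty - tx) := by
      rcases le_or_gt s tx with h2 | h2
      · have hτxs : tauf C s x = s := by
          rw [tauf, max_eq_left (by linarith), min_eq_right (by linarith)]
        have : cx = 0 := by
          rw [hcx, coeff_eq hs x, hτxs, show s * s = s ^ 2 by ring]; ring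
        rw [this, zero_mul]
        exact mul_nonneg (by positivity) (by linarith [hxy])
      · have hb : cx * tx ≤ 4 / s ^ 2 * (s - tx) := by
          rcases le_or_gt tx (s / 2) with h3 | h3
          · have := coeff_le (C := C) hs x
            rw [← hcx] at this
            have h4 : cx * tx ≤ (4 / s ^ 2) * tx :=
              mul_le_mul_of_nonneg_right this htx0
            have : tx ≤ s - tx := by linarith
            nlinarith [coeff_nonneg (C := C) hs x]
          · have hτxt : tauf C s x = tx := by
              rw [tauf, max_eq_left h3.le, min_eq_left h2.le]
            rw [hcx, coeff_eq hs x, hτxt]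
            have htxne : tx ≠ 0 := ne_of_gt (lt_trans (half_pos hs) h3)
            have : (-(4 / s ^ 2) + 4 / (s * tx)) * tx = 4 / s ^ 2 * (s - tx) := by
              field_simp
              ring
            rw [this]
        have h6 : s - tx ≤ ty - tx := by linarith
        have h7 := mul_le_mul_of_nonneg_left h6 (show (0:ℝ) ≤ 4 / s ^ 2 by positivity)
        linarith
    have : ty - tx ≤ ‖x - y‖ := by
      rw [abs_sub_comm] at htlip
      calc ty - tx ≤ |ty - tx| := le_abs_self _
        _ ≤ ‖x - y‖ := htlip
    have h40 : 4 / s ^ 2 * (ty - tx) ≤ 40 / s ^ 2 * ‖x - y‖ := by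
      have h1 : 4 / s ^ 2 * (ty - tx) ≤ 4 / s ^ 2 * ‖x - y‖ := by
        apply mul_le_mul_of_nonneg_left this (by positivity)
      have h2 : 4 / s ^ 2 * ‖x - y‖ ≤ 40 / s ^ 2 * ‖x - y‖ := by
        apply mul_le_mul_of_nonneg_right ?_ hnn
        apply div_le_div_of_nonneg_right (by norm_num) (by positivity)
      linarith
    linarith
  
lemma Vf_lip (hs : 0 < s) (x y : E) :
    ‖Vf hne hcl hconv s x - Vf hne hcl hconv s y‖ ≤ 40 / s ^ 2 * ‖x - y‖ := by
  rcases le_total (infDist x C) (infDist y C) with h | h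
  · exact Vf_lip_aux hne hcl hconv hs x y h
  · rw [norm_sub_rev, norm_sub_rev x y]
    exact Vf_lip_aux hne hcl hconv hs y x h

end SD
end

noncomputable section
namespace SD

open Metric Asymptotics Filter
open scoped RealInnerProductSpace Topology

variable {d : ℕ} {δ : ℝ}

lemma sqrtd_pos (hd : 1 ≤ d) : (0:ℝ) < Real.sqrt d := by
  apply Real.sqrt_pos.2
  have : (1:ℝ) ≤ d := by exact_mod_cast hd
  linarith

lemma s_sq (hd : 1 ≤ d) (hδ : 0 < δ) : (δ * Real.sqrt d) ^ 2 = δ ^ 2 * d := by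
  rw [mul_pow, Real.sq_sqrt (by positivity)]

lemma pdelta_eq_qfun (hd : 1 ≤ d) (hδ : 0 < δ) {t : ℝ} (ht : 0 ≤ t) :
    pdelta d δ t = qfun (δ * Real.sqrt d) (t ^ 2) := by
  have hs : 0 < δ * Real.sqrt d := mul_pos hδ (sqrtd_pos hd)
  have hs2 := s_sq hd hδ
  rw [pdelta, qfun]
  rcases le_or_gt t (δ * Real.sqrt d / 2) with h1 | h1
  · have c1 : t ^ 2 ≤ (δ * Real.sqrt d) ^ 2 / 4 := by nlinarith
    rw [if_pos h1, if_pos c1, ← hs2]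
  · have c1 : ¬ t ^ 2 ≤ (δ * Real.sqrt d) ^ 2 / 4 := by push_neg; nlinarith
    rcases lt_or_ge t (δ * Real.sqrt d) with h2 | h2
    · have c2 : t ^ 2 < (δ * Real.sqrt d) ^ 2 := by nlinarith
      rw [if_neg (not_le.2 h1), if_pos h2, if_neg c1, if_pos c2, ← hs2, Real.sqrt_sq ht]
    · have c2 : ¬ t ^ 2 < (δ * Real.sqrt d) ^ 2 := by push_neg; nlinarith
      rw [if_neg (not_le.2 h1), if_neg (not_lt.2 h2), if_neg c1, if_neg c2]

lemma pdelta_bounds (hd : 1 ≤ d) (hδ : 0 < δ) {t : ℝ} (ht : 0 ≤ t) :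
    0 ≤ pdelta d δ t ∧ pdelta d δ t ≤ 1 := by
  have hs : 0 < δ * Real.sqrt d := mul_pos hδ (sqrtd_pos hd)
  have hs2 := s_sq hd hδ
  have hD : (0:ℝ) < δ ^ 2 * d := by rw [← hs2]; positivity
  rw [pdelta]
  split_ifs with h1 h2
  · constructor
    · exact mul_nonneg (div_nonneg (by norm_num) hD.le) (sq_nonneg t)
    · have e : 2 / (δ ^ 2 * d) * (δ ^ 2 * d / 4) = 1 / 2 := by
        field_simp
        norm_num
      have h2 : t ^ 2 ≤ δ ^ 2 * d / 4 := by nlinarith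
      have := mul_le_mul_of_nonneg_left h2 (show (0:ℝ) ≤ 2 / (δ ^ 2 * d) by positivity)
      linarith
  · push_neg at h1
    have e : -(2 / (δ ^ 2 * d)) * t ^ 2 + 4 / (δ * Real.sqrt d) * t - 1
        = 1 - 2 / (δ ^ 2 * d) * (δ * Real.sqrt d - t) ^ 2 := by
      rw [← hs2]
      field_simp
      ring
    rw [e]
    have hsq : (δ * Real.sqrt d - t) ^ 2 ≤ (δ * Real.sqrt d) ^ 2 / 4 := by nlinarith
    have e2 : 2 / (δ ^ 2 * d) * ((δ * Real.sqrt d) ^ 2 / 4) = 1 / 2 := by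
      rw [hs2]; field_simp; norm_num
    have h3 := mul_le_mul_of_nonneg_left hsq (show (0:ℝ) ≤ 2 / (δ ^ 2 * d) by positivity)
    have h4 : 0 ≤ 2 / (δ ^ 2 * d) * (δ * Real.sqrt d - t) ^ 2 := by positivity
    constructor <;> linarith
  · norm_num

lemma pdelta_zero (hd : 1 ≤ d) (hδ : 0 < δ) : pdelta d δ 0 = 0 := by
  have hs : 0 < δ * Real.sqrt d := mul_pos hδ (sqrtd_pos hd)
  rw [pdelta, if_pos (by positivity)]
  ring

lemma pdelta_one (hd : 1 ≤ d) (hδ : 0 < δ) {t : ℝ} (ht : δ * Real.sqrt d ≤ t) :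
    pdelta d δ t = 1 := by
  have hs : 0 < δ * Real.sqrt d := mul_pos hδ (sqrtd_pos hd)
  rw [pdelta, if_neg (by push_neg; linarith), if_neg (by push_neg; linarith)]

end SD
end


theorem stmt9 (d : ℕ) (hd : 1 ≤ d) (δ : ℝ) (hδ : 0 < δ)
    (C : Set (EuclideanSpace ℝ (Fin d))) (hCne : C.Nonempty) (hCcl : IsClosed C)
    (hCconv : Convex ℝ C) :
    -- (i) `f` is continuously differentiable on ℝ^d
    ContDiff ℝ 1 (smoothDistFun d δ C) ∧
    -- (ii) `0 ≤ f ≤ 1`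
    (∀ x, 0 ≤ smoothDistFun d δ C x ∧ smoothDistFun d δ C x ≤ 1) ∧
    -- (iii) `f = 0` on `C`
    (∀ x ∈ C, smoothDistFun d δ C x = 0) ∧
    -- (iv) `f(x) = 1` whenever `dist₂(x, C) ≥ δ√d`
    (∀ x, δ * Real.sqrt d ≤ Metric.infDist x C → smoothDistFun d δ C x = 1) ∧
    -- (v) `f` is Lipschitz with constant `2/(δ√d)`
    (∀ x y, |smoothDistFun d δ C x - smoothDistFun d δ C y|
      ≤ 2 / (δ * Real.sqrt d) * ‖x - y‖) ∧
    -- (vi) the gradient of `f` is Lipschitz with constant `40/(δ²d)`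
    (∀ x y, ‖fderiv ℝ (smoothDistFun d δ C) x - fderiv ℝ (smoothDistFun d δ C) y‖
      ≤ 40 / (δ ^ 2 * d) * ‖x - y‖) := by
  have hs : 0 < δ * Real.sqrt d := mul_pos hδ (SD.sqrtd_pos hd)
  have hs2 := SD.s_sq hd hδ
  have hfe : smoothDistFun d δ C
      = fun x => SD.qfun (δ * Real.sqrt d) (Metric.infDist x C ^ 2) :=
    funext fun x => SD.pdelta_eq_qfun hd hδ Metric.infDist_nonneg
  have hder : ∀ x, HasFDerivAt (smoothDistFun d δ C)
      (innerSL ℝ (SD.Vf hCne hCcl hCconv (δ * Real.sqrt d) x)) x := by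
    intro x
    rw [hfe]
    exact SD.f_hasFDerivAt hCne hCcl hCconv hs x
  have hVlip := SD.Vf_lip hCne hCcl hCconv hs
  refine ⟨?_, ?_, ?_, ?_, ?_, ?_⟩
  · rw [contDiff_one_iff_fderiv]
    refine ⟨fun x => (hder x).differentiableAt, ?_⟩
    have hfd : fderiv ℝ (smoothDistFun d δ C)
        = fun x => innerSL ℝ (SD.Vf hCne hCcl hCconv (δ * Real.sqrt d) x) :=
      funext fun x => (hder x).fderiv
    rw [hfd]
    have hlip : LipschitzWith (Real.toNNReal (40 / (δ * Real.sqrt d) ^ 2))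
        (SD.Vf hCne hCcl hCconv (δ * Real.sqrt d)) := by
      apply LipschitzWith.of_dist_le_mul
      intro x y
      rw [dist_eq_norm, dist_eq_norm,
        Real.coe_toNNReal _ (by positivity)]
      exact hVlip x y
    exact (innerSL ℝ).continuous.comp hlip.continuous
  · intro x
    exact SD.pdelta_bounds hd hδ Metric.infDist_nonneg
  · intro x hx
    show pdelta d δ (Metric.infDist x C) = 0
    rw [Metric.infDist_zero_of_mem hx]
    exact SD.pdelta_zero hd hδ
  · intro x hx
    exact SD.pdelta_one hd hδ hx
  · intro x y
    rw [← Real.norm_eq_abs]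
    apply convex_univ.norm_image_sub_le_of_norm_fderiv_le
      (fun z _ => (hder z).differentiableAt) (fun z _ => ?_) trivial trivial
    rw [(hder z).fderiv, innerSL_apply_norm]
    exact SD.Vf_norm_le hCne hCcl hCconv hs z
  · intro x y
    rw [(hder x).fderiv, (hder y).fderiv, ← map_sub, innerSL_apply_norm, ← hs2]
    exact hVlip x y


end
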